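/- Let Ω ⊂ ℝⁿ be a bounded open set with C² boundary, let (t,x) ∈ (0,T)×∂Ω, let ν(x) be the outward unit normal to ∂Ω at x, and let v ∈ ℝⁿ satisfy ⟨v,ν(x)⟩ = 0. Then there exists an absolutely continuous curve γ̂ : [0,T] → Ω̄ with γ̂(t) = x that is differentiable at t with derivative γ̂'(t) = v. -/

import Mathlib

open MeasureTheory Filter Metric Set Topology
noncomputable section

/-- Euclidean space `ℝⁿ`. -/
abbrev E (n : ℕ) := EuclideanSpace ℝ (Fin n)

/-- The oriented boundary distance `b_Ω = d_Ω − d_{Ωᶜ}`. -/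
def oriDist {n : ℕ} (Ω : Set (E n)) (x : E n) : ℝ :=
  Metric.infDist x Ω - Metric.infDist x Ωᶜ

/-- `Ω` has `C²` boundary: the oriented boundary distance is `C²` on a tube around `∂Ω`. -/
def HasC2Boundary {n : ℕ} (Ω : Set (E n)) : Prop :=
  ∃ ρ > 0, ContDiffOn ℝ 2 (oriDist Ω) {y | ∃ x ∈ frontier Ω, dist y x < ρ}

/-- The outward unit normal at a boundary point (the gradient of the oriented distance). -/
def outerNormal {n : ℕ} (Ω : Set (E n)) (x : E n) : E n := gradient (oriDist Ω) x

/-- The (Fréchet) superdifferential of `u` at `x`, relative to the set `S`: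
`D⁺u(x) = {p | limsup_{y→x, y∈S} (u(y)−u(x)−⟨p,y−x⟩)/‖y−x‖ ≤ 0}`. -/
def superDiffOn {n : ℕ} (S : Set (E n)) (u : E n → ℝ) (x : E n) : Set (E n) :=
  {p | ∀ ε > 0, ∃ δ > 0, ∀ y ∈ S, ‖y - x‖ < δ →
      u y - u x - (inner ℝ p (y - x) : ℝ) ≤ ε * ‖y - x‖}

/-- `γ` is absolutely continuous on `[a,b]`, with (interval-)integrable derivative. -/
def IsACOn {n : ℕ} (γ : ℝ → E n) (a b : ℝ) : Prop :=
  ∃ γ' : ℝ → E n, IntervalIntegrable γ' volume a b ∧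
    ∀ s ∈ Set.Icc a b, γ s = γ a + ∫ r in a..s, γ' r

/-- The class `Γ` of absolutely continuous curves on `[0,T]` with values in `Ω̄`. -/
def AdmCurves {n : ℕ} (Ω : Set (E n)) (T : ℝ) : Set (ℝ → E n) :=
  {γ | IsACOn γ 0 T ∧ ∀ s ∈ Set.Icc 0 T, γ s ∈ closure Ω}

/-!
The oriented distance `b` vanishes on `∂Ω`, is `C²` near `x`, and its gradient `ν` at `x` is
nonzero: `b` grows at unit rate from a point of `Ω` to a nearest point of `Ωᶜ`, which is
incompatible with a vanishing strict derivative. By Taylor's formula,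
`b (x + w) ≤ ⟪ν, w⟫ + K ‖w‖²`, so for `v ⊥ ν` and `a` large the parabola
`h ↦ x + h • v - a h² • ν` satisfies `b ≤ 0`, i.e. stays in `Ω̄`, for small `|h|`. Running it
with the bounded parameter `h(s) = δ sin ((s - t) / δ)` gives a `C¹` curve through `x` at time
`t` with velocity `v`.
-/

open InnerProductSpace
open scoped Gradient

theorem ContDiffAt.isBigO_sub_sub_fderiv {F G : Type*} [NormedAddCommGroup F] [NormedSpace ℝ F]
    [NormedAddCommGroup G] [NormedSpace ℝ G] {f : F → G} {x : F} (hf : ContDiffAt ℝ 2 f x) :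
    (fun w => f (x + w) - f x - fderiv ℝ f x w) =O[𝓝 0] fun w => ‖w‖ ^ 2 := by
  obtain ⟨K, s, hs, hK⟩ := (hf.fderiv_right (m := 1) (by norm_num)).exists_lipschitzOnWith
  have hdiff : ∀ᶠ y in 𝓝 x, DifferentiableAt ℝ f y :=
    (hf.eventually (by simp)).mono fun y hy => hy.differentiableAt (by norm_num)
  obtain ⟨r, hr, hball⟩ := nhds_basis_closedBall.mem_iff.1 (inter_mem hs hdiff)
  refine Asymptotics.IsBigO.of_bound K ?_
  filter_upwards [closedBall_mem_nhds (0 : F) hr] with w hw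
  have hsub : closedBall x ‖w‖ ⊆ s ∩ {y | DifferentiableAt ℝ f y} :=
    (closedBall_subset_closedBall (by simpa using hw)).trans hball
  have hbound : ∀ y ∈ closedBall x ‖w‖, ‖fderiv ℝ f y - fderiv ℝ f x‖ ≤ K * ‖w‖ := fun y hy =>
    (hK.norm_sub_le (hsub hy).1 (mem_of_mem_nhds hs)).trans
      (mul_le_mul_of_nonneg_left (by simpa [dist_eq_norm] using hy) K.coe_nonneg)
  have hmv := (convex_closedBall x ‖w‖).norm_image_sub_le_of_norm_fderiv_le'
    (fun y hy => (hsub hy).2) hbound (mem_closedBall_self (norm_nonneg w))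
    (by simp [dist_eq_norm] : x + w ∈ closedBall x ‖w‖)
  rw [add_sub_cancel_left] at hmv
  simpa [sq, mul_assoc] using hmv

theorem exists_eventually_nonpos_along_parabola {F : Type*} [NormedAddCommGroup F]
    [InnerProductSpace ℝ F] [CompleteSpace F] {f : F → ℝ} {x v : F}
    (hf : ContDiffAt ℝ 2 f x) (hfx : f x = 0) (hν : ∇ f x ≠ 0) (hv : inner ℝ v (∇ f x) = 0) :
    ∃ a : ℝ, ∀ᶠ h in 𝓝 (0 : ℝ), f (x + (h • v - (a * h ^ 2) • ∇ f x)) ≤ 0 := by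
  set ν := ∇ f x
  have hN : 0 < ‖ν‖ ^ 2 := by positivity
  obtain ⟨K, hK⟩ := hf.isBigO_sub_sub_fderiv.bound
  -- with this `a`, the inward push `-a h² ‖ν‖²` beats the curvature term `K h² ‖v‖²` by `h²`
  set a := (K * ‖v‖ ^ 2 + 1) / ‖ν‖ ^ 2
  have ha : a * ‖ν‖ ^ 2 = K * ‖v‖ ^ 2 + 1 := div_mul_cancel₀ _ hN.ne'
  set w : ℝ → F := fun h => h • v - (a * h ^ 2) • ν
  have hw : Tendsto w (𝓝 0) (𝓝 0) := by
    simpa [w] using ((by fun_prop : Continuous w).tendsto 0)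
  have hsmall : ∀ᶠ h in 𝓝 (0 : ℝ), K * a ^ 2 * ‖ν‖ ^ 2 * h ^ 2 ≤ 1 := by
    have : Tendsto (fun h : ℝ => K * a ^ 2 * ‖ν‖ ^ 2 * h ^ 2) (𝓝 0) (𝓝 0) := by
      simpa using ((by fun_prop : Continuous fun h : ℝ => K * a ^ 2 * ‖ν‖ ^ 2 * h ^ 2).tendsto 0)
    exact this.eventually (eventually_le_nhds one_pos)
  refine ⟨a, ?_⟩
  filter_upwards [hw.eventually hK, hsmall] with h hTaylor hh
  have hlin : fderiv ℝ f x (w h) = -(a * h ^ 2 * ‖ν‖ ^ 2) := by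
    rw [← inner_gradient_left, inner_sub_right, real_inner_smul_right, real_inner_smul_right,
      real_inner_comm, hv, real_inner_self_eq_norm_sq]
    ring
  have hnorm : ‖w h‖ ^ 2 = h ^ 2 * ‖v‖ ^ 2 + a ^ 2 * h ^ 4 * ‖ν‖ ^ 2 := by
    rw [norm_sub_sq_real, real_inner_smul_left, real_inner_smul_right, hv, norm_smul, norm_smul,
      Real.norm_eq_abs, Real.norm_eq_abs, mul_pow, mul_pow, sq_abs, sq_abs]
    ring
  rw [hfx, sub_zero, hlin, norm_pow, norm_norm, hnorm] at hTaylor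
  calc f (x + w h)
      ≤ -(a * h ^ 2 * ‖ν‖ ^ 2) + K * (h ^ 2 * ‖v‖ ^ 2 + a ^ 2 * h ^ 4 * ‖ν‖ ^ 2) := by
        linarith [Real.le_norm_self (f (x + w h) - -(a * h ^ 2 * ‖ν‖ ^ 2))]
    _ = -(h ^ 2 * (1 - K * a ^ 2 * ‖ν‖ ^ 2 * h ^ 2)) := by linear_combination (-h ^ 2) * ha
    _ ≤ 0 := neg_nonpos.2 (mul_nonneg (sq_nonneg h) (sub_nonneg.2 hh))

theorem isACOn_of_contDiff {n : ℕ} {γ : ℝ → E n} (hγ : ContDiff ℝ 1 γ) (a b : ℝ) :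
    IsACOn γ a b := by
  refine ⟨deriv γ, (hγ.continuous_deriv le_rfl).intervalIntegrable a b, fun s _ => ?_⟩
  rw [intervalIntegral.integral_deriv_eq_sub (fun r _ => hγ.differentiable one_ne_zero r)
    ((hγ.continuous_deriv le_rfl).intervalIntegrable a s)]
  abel

theorem exists_contDiff_hasDerivAt_one_abs_le (t : ℝ) {δ : ℝ} (hδ : 0 < δ) :
    ∃ φ : ℝ → ℝ, ContDiff ℝ 1 φ ∧ φ t = 0 ∧ HasDerivAt φ 1 t ∧ ∀ s, |φ s| ≤ δ := by
  refine ⟨fun s => δ * Real.sin ((s - t) / δ), by fun_prop, by simp, ?_, fun s => ?_⟩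
  · have := (((hasDerivAt_id t).sub_const t).div_const δ).sin.const_mul δ
    simpa [hδ.ne'] using this
  · rw [abs_mul, abs_of_pos hδ]
    exact mul_le_of_le_one_right hδ.le (Real.abs_sin_le_one _)

section OrientedDistance

variable {n : ℕ} {Ω : Set (E n)}

theorem oriDist_of_mem {y : E n} (hy : y ∈ Ω) : oriDist Ω y = -infDist y Ωᶜ := by
  simp [oriDist, infDist_zero_of_mem hy]

theorem oriDist_nonneg_of_notMem {y : E n} (hy : y ∉ Ω) : 0 ≤ oriDist Ω y := by
  simp [oriDist, infDist_zero_of_mem (show y ∈ Ωᶜ from hy), infDist_nonneg]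

theorem oriDist_eq_zero_of_mem_frontier {x : E n} (hx : x ∈ frontier Ω) : oriDist Ω x = 0 := by
  have hxc : x ∈ closure Ωᶜ := by rw [closure_compl]; exact hx.2
  simp [oriDist, infDist_zero_of_mem_closure hx.1, infDist_zero_of_mem_closure hxc]

theorem mem_closure_of_oriDist_nonpos (hΩ : Ω.Nonempty) {y : E n} (hy : oriDist Ω y ≤ 0) :
    y ∈ closure Ω := by
  by_cases hyΩ : y ∈ Ω
  · exact subset_closure hyΩ
  rw [mem_closure_iff_infDist_zero hΩ]
  have : infDist y Ωᶜ = 0 := infDist_zero_of_mem (show y ∈ Ωᶜ from hyΩ)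
  rw [oriDist, this] at hy
  linarith [infDist_nonneg (x := y) (s := Ω)]

theorem HasC2Boundary.contDiffAt (hΩ : HasC2Boundary Ω) {x : E n} (hx : x ∈ frontier Ω) :
    ContDiffAt ℝ 2 (oriDist Ω) x := by
  obtain ⟨ρ, hρ, hC2⟩ := hΩ
  exact hC2.contDiffAt (mem_of_superset (ball_mem_nhds x hρ) fun y hy => ⟨x, hx, hy⟩)

theorem outerNormal_ne_zero (hΩo : IsOpen Ω) {x : E n} (hx : x ∈ frontier Ω)
    (hb : ContDiffAt ℝ 1 (oriDist Ω) x) : outerNormal Ω x ≠ 0 := by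
  intro hν
  have hL : fderiv ℝ (oriDist Ω) x = 0 := by
    rw [← toDual_gradient]
    exact (map_eq_zero_iff _ (toDual ℝ (E n)).injective).2 hν
  have hstrict := hb.hasStrictFDerivAt one_ne_zero
  rw [hL] at hstrict
  obtain ⟨ε, hε, hsmall⟩ := Metric.eventually_nhds_iff.1
    (hstrict.isLittleO.def (c := 1 / 2) (by norm_num))
  have hxc : x ∈ Ωᶜ := by rw [hΩo.frontier_eq] at hx; exact hx.2
  obtain ⟨y, hyΩ, hxy⟩ :=
    Metric.mem_closure_iff.1 (frontier_subset_closure hx) (ε / 2) (half_pos hε)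
  obtain ⟨q, hqΩ, hq⟩ := hΩo.isClosed_compl.exists_infDist_eq_dist ⟨x, hxc⟩ y
  have hyq : dist y q ≤ dist y x := hq ▸ infDist_le_dist_of_mem hxc
  have hnear : dist (q, y) (x, x) < ε := by
    rw [Prod.dist_eq, max_lt_iff]
    constructor <;> linarith [dist_triangle q y x, dist_comm q y, dist_comm x y]
  have hgrowth : dist y q ≤ oriDist Ω q - oriDist Ω y := by
    rw [oriDist_of_mem hyΩ, ← hq]
    linarith [oriDist_nonneg_of_notMem hqΩ]
  have hpos : 0 < dist y q := dist_pos.2 fun h => hqΩ (h ▸ hyΩ)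
  have hflat : |oriDist Ω q - oriDist Ω y| ≤ 1 / 2 * dist q y := by
    simpa [dist_eq_norm] using hsmall hnear
  linarith [le_abs_self (oriDist Ω q - oriDist Ω y), dist_comm q y]

end OrientedDistance

theorem stmt11_general {n : ℕ} (T : ℝ)
    (Ω : Set (E n)) (hΩo : IsOpen Ω) (hΩne : Ω.Nonempty)
    (hΩ2 : HasC2Boundary Ω)
    (t : ℝ)
    (x : E n) (hx : x ∈ frontier Ω)
    (v : E n) (hv : (inner ℝ v (outerNormal Ω x) : ℝ) = 0) :
    ∃ γ : ℝ → E n, γ ∈ AdmCurves Ω T ∧ γ t = x ∧ HasDerivAt γ v t := by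
  have hb := hΩ2.contDiffAt hx
  obtain ⟨a, ha⟩ := exists_eventually_nonpos_along_parabola hb
    (oriDist_eq_zero_of_mem_frontier hx) (outerNormal_ne_zero hΩo hx (hb.of_le one_le_two)) hv
  obtain ⟨δ, hδ, hδa⟩ := Metric.eventually_nhds_iff.1 ha
  obtain ⟨φ, hφ, hφt, hφ', hφδ⟩ := exists_contDiff_hasDerivAt_one_abs_le t (half_pos hδ)
  refine ⟨fun s => x + (φ s • v - (a * φ s ^ 2) • outerNormal Ω x),
    ⟨isACOn_of_contDiff (by fun_prop) 0 T, fun s _ => mem_closure_of_oriDist_nonpos hΩne ?_⟩,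
    by simp [hφt], ?_⟩
  · exact hδa (by rw [Real.dist_0_eq_abs]; linarith [hφδ s])
  · simpa [hφt] using
      ((hφ'.smul_const v).sub (((hφ'.pow 2).const_mul a).smul_const (outerNormal Ω x))).const_add x

/-- Lemma 4.1 of the paper: let `Ω ⊂ ℝⁿ` be a bounded open set with
`C²` boundary, `(t,x) ∈ (0,T) × ∂Ω`, `ν(x)` the outward unit normal to `∂Ω` at `x`, and
let `v ∈ ℝⁿ` satisfy `⟨v,ν(x)⟩ = 0`.  Then there exists an absolutely continuous curve
`γ̂ : [0,T] → Ω̄` with `γ̂(t) = x` which is differentiable at `t` with `γ̂'(t) = v`. -/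
theorem stmt11 {n : ℕ} (T : ℝ) (hT : 0 < T)
    (Ω : Set (E n)) (hΩo : IsOpen Ω) (hΩne : Ω.Nonempty)
    (hΩb : Bornology.IsBounded Ω) (hΩ2 : HasC2Boundary Ω)
    (t : ℝ) (ht : t ∈ Set.Ioo 0 T)
    (x : E n) (hx : x ∈ frontier Ω)
    (v : E n) (hv : (inner ℝ v (outerNormal Ω x) : ℝ) = 0) :
    ∃ γ : ℝ → E n, γ ∈ AdmCurves Ω T ∧ γ t = x ∧ HasDerivAt γ v t :=
  stmt11_general T Ω hΩo hΩne hΩ2 t x hx v hv
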